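/- arXiv:1901.09958 — 4 statements merged into one kernel-verified Lean document; each statement's English description precedes it below -/
import Mathlib

section
/- Let a ∈ C¹[0,R] with a(0)=0, a(x)>0 and a'(x)>0 on (0,R), and a''≥0 on (0,R). Define G(x)=∫₀ˣ a(s)^{n-1} ds and S(x) = G(x)a'(x)/a(x) - a(x)^{n-1}/n. Then S(x) ≥ 0 for all x ∈ (0,R). -/
open Set MeasureTheory intervalIntegral

theorem stmt_1 (R : ℝ) (hR : 0 < R) (n : ℕ) (hn : 2 < n)
    (a : ℝ → ℝ) (ha : ContDiffOn ℝ 2 a (Set.Icc 0 R))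
    (ha0 : a 0 = 0)
    (hapos : ∀ x ∈ Set.Ioo (0:ℝ) R, 0 < a x)
    (ha'pos : ∀ x ∈ Set.Ioo (0:ℝ) R, 0 < deriv a x)
    (ha''nonneg : ∀ x ∈ Set.Ioo (0:ℝ) R, 0 ≤ deriv (deriv a) x) :
    ∀ x ∈ Set.Ioo (0:ℝ) R,
      0 ≤ (∫ s in (0:ℝ)..x, a s ^ (n - 1)) * deriv a x / a x - a x ^ (n - 1) / n := by
  intro x hx
  obtain ⟨hx0, hxR⟩ := hx
  have haC : ContinuousOn a (Icc 0 R) := ha.continuousOn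
  have hIoo : Ioo (0:ℝ) R ⊆ Icc 0 R := Ioo_subset_Icc_self
  -- differentiability of a at interior points
  have hdiffa : ∀ s ∈ Ioo (0:ℝ) R, HasDerivAt a (deriv a s) s := by
    intro s hs
    have : DifferentiableAt ℝ a s :=
      (ha.differentiableOn (by norm_num)).differentiableAt
        (Icc_mem_nhds hs.1 hs.2)
    exact this.hasDerivAt
  -- a' is C¹ on the open interval
  have haIoo : ContDiffOn ℝ 2 a (Ioo 0 R) := ha.mono hIoo
  have hderivC : ContDiffOn ℝ 1 (deriv a) (Ioo 0 R) :=
    haIoo.deriv_of_isOpen isOpen_Ioo (by norm_num)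
  have hderivCont : ContinuousOn (deriv a) (Ioo 0 R) := hderivC.continuousOn
  have hderivDiff : DifferentiableOn ℝ (deriv a) (Ioo 0 R) :=
    hderivC.differentiableOn (by norm_num)
  -- a' monotone on Ioo 0 R
  have hmono : MonotoneOn (deriv a) (Ioo 0 R) := by
    refine monotoneOn_of_deriv_nonneg (convex_Ioo 0 R) hderivCont ?_ ?_
    · rw [interior_Ioo]; exact hderivDiff
    · rw [interior_Ioo]; exact ha''nonneg
  set d := deriv a x with hd
  set F : ℝ → ℝ := fun s => ∫ t in (0:ℝ)..s, a t ^ (n - 1) with hF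
  set h : ℝ → ℝ := fun s => d * F s - a s ^ n / n with hh
  have hsubIcc : Icc (0:ℝ) x ⊆ Icc 0 R := Icc_subset_Icc le_rfl hxR.le
  have hintg : ContinuousOn (fun t => a t ^ (n - 1)) (Icc 0 R) := haC.pow _
  -- continuity of h on [0, x]
  have hFcont : ContinuousOn F (Icc 0 x) := by
    have : IntegrableOn (fun t => a t ^ (n - 1)) (uIcc (0:ℝ) x) := by
      rw [uIcc_of_le hx0.le]
      exact (hintg.mono hsubIcc).integrableOn_compact isCompact_Icc
    simpa [hF, uIcc_of_le hx0.le] using continuousOn_primitive_interval this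
  have hhcont : ContinuousOn h (Icc 0 x) := by
    apply (continuousOn_const.mul hFcont).sub
    exact (((haC.mono hsubIcc).pow n).div_const _)
  -- derivative of h on (0, x)
  have hsub : Ioo (0:ℝ) x ⊆ Ioo 0 R := Ioo_subset_Ioo le_rfl hxR.le
  have hhderiv : ∀ s ∈ Ioo (0:ℝ) x, HasDerivAt h
      (d * a s ^ (n - 1) - (↑n * a s ^ (n - 1) * deriv a s) / n) s := by
    intro s hs
    have hsR := hsub hs
    have hFder : HasDerivAt F (a s ^ (n - 1)) s := by
      refine integral_hasDerivAt_right ?_ ?_ ?_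
      · apply ContinuousOn.intervalIntegrable
        rw [uIcc_of_le hs.1.le]
        exact hintg.mono (Icc_subset_Icc le_rfl hsR.2.le)
      · exact (hintg.mono (subset_trans hIoo (by rfl))).stronglyMeasurableAtFilter isOpen_Ioo s hsR
      · exact (haC.continuousAt (Icc_mem_nhds hsR.1 hsR.2)).pow _
    have hander : HasDerivAt (fun s => a s ^ n) (↑n * a s ^ (n - 1) * deriv a s) s :=
      (hdiffa s hsR).pow n
    exact ((hFder.const_mul d).sub (hander.div_const n))
  -- h is monotone on [0, x]
  have hhmono : MonotoneOn h (Icc 0 x) := by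
    refine monotoneOn_of_deriv_nonneg (convex_Icc 0 x) hhcont ?_ ?_
    · rw [interior_Icc]
      exact fun s hs => ((hhderiv s hs).differentiableAt).differentiableWithinAt
    · rw [interior_Icc]
      intro s hs
      rw [(hhderiv s hs).deriv]
      have hsR := hsub hs
      have hn0 : (n:ℝ) ≠ 0 := by positivity
      have h1 : (↑n * a s ^ (n - 1) * deriv a s) / n = a s ^ (n - 1) * deriv a s := by
        field_simp
      rw [h1, ← sub_nonneg.symm]
      have h2 : deriv a s ≤ d := hmono hsR ⟨hx0, hxR⟩ hs.2.le
      nlinarith [pow_nonneg (hapos s hsR).le (n-1)]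
  have hh0 : h 0 = 0 := by
    simp [hh, hF, ha0, zero_pow (by omega : n ≠ 0)]
  have hkey : 0 ≤ h x := by
    have := hhmono (left_mem_Icc.2 hx0.le) (right_mem_Icc.2 hx0.le) hx0.le
    linarith [hh0 ▸ this]
  -- final algebra
  have hA : 0 < a x := hapos x ⟨hx0, hxR⟩
  have hnR : (0:ℝ) < n := by positivity
  have hpow : a x ^ n = a x ^ (n - 1) * a x := by
    rw [← pow_succ]; congr 1; omega
  have hkey' : a x ^ n / n ≤ d * F x := by
    simpa [hh, sub_nonneg] using hkey
  rw [sub_nonneg]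
  rw [div_le_div_iff₀ hnR hA]
  calc a x ^ (n - 1) * a x = a x ^ n := hpow.symm
    _ ≤ n * (d * F x) := (div_le_iff₀' hnR).mp hkey'
    _ = F x * d * n := by ring
end

section
/- Let u ∈ C¹[0,R] with u(R) = 0 and u not identically zero, let a be continuous and positive on (0,R] with a(0)=0, and let G(x)=∫₀ˣ a(s)^{n-1} ds. Then ∫₀ᴿ u(x)² a(x)^{n-1} dx < 4 ∫₀ᴿ G(x)² u'(x)² / a(x)^{n-1} dx, provided both integrals are finite. -/
/-!
With `p = aⁿ⁻¹` and `G x = ∫₀ˣ p`, integrating `(u² G)' = 2 u u' G + u² p` over `[0, R]` gives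
`∫ u² p = -2 ∫ u u' G`, because `u R = 0` and `G 0 = 0`. Completing the square turns this into
`4 ∫ G² u'² / p - ∫ u² p = ∫ (2 G u' + u p)² / p ≥ 0`. If the right-hand side vanished, then
`2 G u' + u p = 0` on `(0, R)`, so `(u² G)' = u (2 G u' + u p) = 0` and `u² G ≡ u(R)² G(R) = 0`;
since `G > 0` on `(0, R]`, this forces `u ≡ 0`.
-/

open Set MeasureTheory intervalIntegral

lemma sq_two_mul_mul_add_mul_div {p : ℝ} (hp : p ≠ 0) (u v g : ℝ) :
    (2 * g * v + u * p) ^ 2 / p = 4 * (g ^ 2 * v ^ 2 / p) + 4 * (u * v * g) + u ^ 2 * p := by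
  field_simp
  ring

lemma four_mul_abs_mul_mul_le {p : ℝ} (hp : 0 < p) (u v g : ℝ) :
    4 * |u * v * g| ≤ 4 * (g ^ 2 * v ^ 2 / p) + u ^ 2 * p := by
  have hplus : 0 ≤ (2 * g * v + u * p) ^ 2 / p := by positivity
  have hminus : 0 ≤ (2 * g * -v + u * p) ^ 2 / p := by positivity
  rw [sq_two_mul_mul_add_mul_div hp.ne'] at hplus hminus
  rw [neg_sq] at hminus
  cases abs_cases (u * v * g) <;> linarith

lemma intervalIntegral_pos_of_continuousOn_Ioo {f : ℝ → ℝ} {a b : ℝ}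
    (hf : ContinuousOn f (Ioo a b)) (hf_nonneg : ∀ x ∈ Ioo a b, 0 ≤ f x)
    (hfi : IntervalIntegrable f volume a b) (hne : ∃ x ∈ Ioo a b, f x ≠ 0) :
    0 < ∫ x in a..b, f x := by
  obtain ⟨x, hx, hfx⟩ := hne
  have hab : a < b := hx.1.trans hx.2
  have hf_ae : 0 ≤ᵐ[volume.restrict (uIoc a b)] f := by
    rw [uIoc_of_le hab.le, Filter.EventuallyLE]
    exact ae_restrict_of_ae_eq_of_ae_restrict Ioo_ae_eq_Ioc
      (ae_restrict_of_forall_mem measurableSet_Ioo hf_nonneg)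
  refine (integral_pos_iff_support_of_nonneg_ae' hf_ae hfi).2 ⟨hab, ?_⟩
  have hopen : IsOpen (Ioo a b ∩ f ⁻¹' {0}ᶜ) :=
    hf.isOpen_inter_preimage isOpen_Ioo isOpen_compl_singleton
  calc (0 : ENNReal) < volume (Ioo a b ∩ f ⁻¹' {0}ᶜ) := hopen.measure_pos volume ⟨x, hx, hfx⟩
    _ ≤ volume (Function.support f ∩ Ioc a b) :=
      measure_mono fun y hy => ⟨hy.2, Ioo_subset_Ioc_self hy.1⟩

section Primitive

variable {p : ℝ → ℝ} {R : ℝ}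

lemma continuousOn_primitive_Icc (hR : 0 ≤ R) (hp : ContinuousOn p (Icc 0 R)) :
    ContinuousOn (fun x => ∫ s in (0 : ℝ)..x, p s) (Icc 0 R) := by
  have h := continuousOn_primitive_interval (μ := volume) (a := 0) (b := R)
    (by rw [uIcc_of_le hR]; exact hp.integrableOn_Icc)
  rwa [uIcc_of_le hR] at h

lemma hasDerivAt_primitive_of_mem_Ioo (hp : ContinuousOn p (Icc 0 R)) {x : ℝ}
    (hx : x ∈ Ioo 0 R) : HasDerivAt (fun y => ∫ s in (0 : ℝ)..y, p s) (p x) x :=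
  integral_hasDerivAt_right
    ((hp.mono (Icc_subset_Icc le_rfl hx.2.le)).intervalIntegrable_of_Icc hx.1.le)
    ((hp.mono Ioo_subset_Icc_self).stronglyMeasurableAtFilter isOpen_Ioo x hx)
    (hp.continuousAt (Icc_mem_nhds hx.1 hx.2))

lemma primitive_pos (hp : ContinuousOn p (Icc 0 R)) (hpos : ∀ x ∈ Ioc 0 R, 0 < p x) {x : ℝ}
    (hx : x ∈ Ioc 0 R) : 0 < ∫ s in (0 : ℝ)..x, p s :=
  intervalIntegral_pos_of_pos_on
    ((hp.mono (Icc_subset_Icc le_rfl hx.2)).intervalIntegrable_of_Icc hx.1.le)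
    (fun y hy => hpos y ⟨hy.1, hy.2.le.trans hx.2⟩) hx.1

end Primitive

section Hardy

variable {R : ℝ} {u u' G p : ℝ → ℝ}

lemma intervalIntegrable_mul_mul_of_sq (hR : 0 ≤ R) (hp : ∀ x ∈ Ioo 0 R, 0 < p x)
    (hw : ContinuousOn (fun x => u x * u' x * G x) (Ioo 0 R))
    (h_up : IntervalIntegrable (fun x => u x ^ 2 * p x) volume 0 R)
    (h_Gu' : IntervalIntegrable (fun x => G x ^ 2 * u' x ^ 2 / p x) volume 0 R) :
    IntervalIntegrable (fun x => u x * u' x * G x) volume 0 R := by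
  rw [intervalIntegrable_iff_integrableOn_Ioo_of_le hR] at h_up h_Gu' ⊢
  refine ((h_Gu'.const_mul 4).add h_up).mono' (hw.aestronglyMeasurable measurableSet_Ioo)
    (ae_restrict_of_forall_mem measurableSet_Ioo fun x hx => ?_)
  have := four_mul_abs_mul_mul_le (hp x hx) (u x) (u' x) (G x)
  rw [Real.norm_eq_abs, Pi.add_apply]
  linarith [abs_nonneg (u x * u' x * G x)]

lemma integral_sq_mul_eq_neg_two_mul_integral (hR : 0 ≤ R) (hu : ContinuousOn u (Icc 0 R))
    (hu' : ∀ x ∈ Ioo 0 R, HasDerivAt u (u' x) x) (hG : ContinuousOn G (Icc 0 R))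
    (hG' : ∀ x ∈ Ioo 0 R, HasDerivAt G (p x) x) (huR : u R = 0) (hG0 : G 0 = 0)
    (h_up : IntervalIntegrable (fun x => u x ^ 2 * p x) volume 0 R)
    (hw : IntervalIntegrable (fun x => u x * u' x * G x) volume 0 R) :
    ∫ x in (0 : ℝ)..R, u x ^ 2 * p x = -2 * ∫ x in (0 : ℝ)..R, u x * u' x * G x := by
  have hFTC := integral_eq_sub_of_hasDerivAt_of_le (f := fun x => u x ^ 2 * G x) hR
    ((hu.pow 2).mul hG)
    (fun x hx => (((hu' x hx).fun_pow 2).fun_mul (hG' x hx)).congr_deriv (by ring))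
    ((hw.const_mul 2).add h_up)
  rw [integral_add (hw.const_mul 2) h_up, intervalIntegral.integral_const_mul, huR, hG0] at hFTC
  linarith

lemma four_mul_integral_sub_integral_eq (hR : 0 ≤ R) (hp : ∀ x ∈ Ioo 0 R, 0 < p x)
    (hu : ContinuousOn u (Icc 0 R)) (hu' : ∀ x ∈ Ioo 0 R, HasDerivAt u (u' x) x)
    (hG : ContinuousOn G (Icc 0 R)) (hG' : ∀ x ∈ Ioo 0 R, HasDerivAt G (p x) x)
    (huR : u R = 0) (hG0 : G 0 = 0)
    (h_up : IntervalIntegrable (fun x => u x ^ 2 * p x) volume 0 R)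
    (h_Gu' : IntervalIntegrable (fun x => G x ^ 2 * u' x ^ 2 / p x) volume 0 R)
    (hw : IntervalIntegrable (fun x => u x * u' x * G x) volume 0 R) :
    4 * (∫ x in (0 : ℝ)..R, G x ^ 2 * u' x ^ 2 / p x) - ∫ x in (0 : ℝ)..R, u x ^ 2 * p x =
      ∫ x in (0 : ℝ)..R, (2 * G x * u' x + u x * p x) ^ 2 / p x := by
  rw [integral_congr_Ioo_of_le hR fun x hx => sq_two_mul_mul_add_mul_div (hp x hx).ne' _ _ _,
    integral_add ((h_Gu'.const_mul 4).add (hw.const_mul 4)) h_up,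
    integral_add (h_Gu'.const_mul 4) (hw.const_mul 4), intervalIntegral.integral_const_mul, intervalIntegral.integral_const_mul,
    integral_sq_mul_eq_neg_two_mul_integral hR hu hu' hG hG' huR hG0 h_up hw]
  ring

lemma eqOn_zero_of_two_mul_mul_add_mul_eq_zero (hR : 0 < R) (hu : ContinuousOn u (Icc 0 R))
    (hu' : ∀ x ∈ Ioo 0 R, HasDerivAt u (u' x) x) (hG : ContinuousOn G (Icc 0 R))
    (hG' : ∀ x ∈ Ioo 0 R, HasDerivAt G (p x) x) (hG_pos : ∀ x ∈ Ioc 0 R, 0 < G x)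
    (huR : u R = 0) (hode : ∀ x ∈ Ioo 0 R, 2 * G x * u' x + u x * p x = 0) :
    EqOn u 0 (Icc 0 R) := by
  have hIoc : EqOn u 0 (Ioc 0 R) := by
    intro c hc
    have hcR : Icc c R ⊆ Icc 0 R := Icc_subset_Icc hc.1.le le_rfl
    have hconst := constant_of_has_deriv_right_zero (f := fun y => u y ^ 2 * G y)
      ((hu.mono hcR).pow 2 |>.mul (hG.mono hcR))
      (fun x hx => by
        have hx' : x ∈ Ioo 0 R := ⟨hc.1.trans_le hx.1, hx.2⟩
        refine ((((hu' x hx').fun_pow 2).fun_mul (hG' x hx')).congr_deriv ?_).hasDerivWithinAt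
        linear_combination u x * hode x hx')
      R ⟨hc.2, le_rfl⟩
    rw [huR, zero_pow two_ne_zero, zero_mul, eq_comm, mul_eq_zero] at hconst
    exact pow_eq_zero_iff two_ne_zero |>.mp (hconst.resolve_right (hG_pos c hc).ne')
  exact hIoc.of_subset_closure hu continuousOn_const Ioc_subset_Icc_self
    (by rw [closure_Ioc hR.ne])

end Hardy

theorem integral_sq_mul_lt_four_mul_integral {R : ℝ} {p u : ℝ → ℝ} (hR : 0 < R)
    (hp : ContinuousOn p (Icc 0 R)) (hp_pos : ∀ x ∈ Ioc 0 R, 0 < p x)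
    (hu : ContDiffOn ℝ 1 u (Icc 0 R)) (huR : u R = 0) (hu_ne : ∃ x ∈ Icc 0 R, u x ≠ 0)
    (h_up : IntervalIntegrable (fun x => u x ^ 2 * p x) volume 0 R)
    (h_Gu' : IntervalIntegrable
      (fun x => (∫ s in (0 : ℝ)..x, p s) ^ 2 * deriv u x ^ 2 / p x) volume 0 R) :
    ∫ x in (0 : ℝ)..R, u x ^ 2 * p x <
      4 * ∫ x in (0 : ℝ)..R, (∫ s in (0 : ℝ)..x, p s) ^ 2 * deriv u x ^ 2 / p x := by
  set G := fun x => ∫ s in (0 : ℝ)..x, p s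
  have hp' : ∀ x ∈ Ioo 0 R, 0 < p x := fun x hx => hp_pos x (Ioo_subset_Ioc_self hx)
  have hG : ContinuousOn G (Icc 0 R) := continuousOn_primitive_Icc hR.le hp
  have hG' : ∀ x ∈ Ioo 0 R, HasDerivAt G (p x) x := fun x hx =>
    hasDerivAt_primitive_of_mem_Ioo hp hx
  have hu_cont : ContinuousOn u (Icc 0 R) := hu.continuousOn
  have hu' : ∀ x ∈ Ioo 0 R, HasDerivAt u (deriv u x) x := fun x hx =>
    ((hu.differentiableOn one_ne_zero x (Ioo_subset_Icc_self hx)).differentiableAt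
      (Icc_mem_nhds hx.1 hx.2)).hasDerivAt
  have hu'_cont : ContinuousOn (deriv u) (Ioo 0 R) :=
    ((hu.continuousOn_derivWithin (uniqueDiffOn_Icc hR) le_rfl).mono Ioo_subset_Icc_self).congr
      fun x hx => (derivWithin_of_mem_nhds (Icc_mem_nhds hx.1 hx.2)).symm
  have hw := intervalIntegrable_mul_mul_of_sq hR.le hp'
    (((hu_cont.mono Ioo_subset_Icc_self).mul hu'_cont).mul (hG.mono Ioo_subset_Icc_self)) h_up h_Gu'
  rw [← sub_pos,
    four_mul_integral_sub_integral_eq hR.le hp' hu_cont hu' hG hG' huR integral_same h_up h_Gu' hw]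
  refine intervalIntegral_pos_of_continuousOn_Ioo ?_
    (fun x hx => div_nonneg (sq_nonneg _) (hp' x hx).le) ?_ ?_
  · have hp_cont := hp.mono Ioo_subset_Icc_self
    exact ((((continuousOn_const.mul (hG.mono Ioo_subset_Icc_self)).mul hu'_cont).add
      ((hu_cont.mono Ioo_subset_Icc_self).mul hp_cont)).pow 2).div hp_cont fun x hx => (hp' x hx).ne'
  · refine (((h_Gu'.const_mul 4).add (hw.const_mul 4)).add h_up).congr_uIoo ?_
    rw [uIoo_of_le hR.le]
    exact fun x hx => (sq_two_mul_mul_add_mul_div (hp' x hx).ne' _ _ _).symm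
  · by_contra! hQ
    obtain ⟨x, hx, hux⟩ := hu_ne
    refine hux (eqOn_zero_of_two_mul_mul_add_mul_eq_zero hR hu_cont hu' hG hG'
      (fun x hx => primitive_pos hp hp_pos hx) huR (fun y hy => ?_) hx)
    have := hQ y hy
    rwa [div_eq_zero_iff, or_iff_left (hp' y hy).ne', pow_eq_zero_iff two_ne_zero] at this

theorem stmt_2_general (R : ℝ) (hR : 0 < R) (n : ℕ)
    (a : ℝ → ℝ) (ha : ContinuousOn a (Set.Icc 0 R))
    (hapos : ∀ x ∈ Set.Ioc (0:ℝ) R, 0 < a x)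
    (u : ℝ → ℝ) (hu : ContDiffOn ℝ 1 u (Set.Icc 0 R))
    (huR : u R = 0)
    (hune : ∃ x ∈ Set.Icc (0:ℝ) R, u x ≠ 0)
    (hint1 : IntervalIntegrable (fun x => u x ^ 2 * a x ^ (n - 1)) MeasureTheory.volume 0 R)
    (hint2 : IntervalIntegrable
      (fun x => (∫ s in (0:ℝ)..x, a s ^ (n - 1)) ^ 2 * (deriv u x) ^ 2 / a x ^ (n - 1))
      MeasureTheory.volume 0 R) :
    (∫ x in (0:ℝ)..R, u x ^ 2 * a x ^ (n - 1)) <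
      4 * ∫ x in (0:ℝ)..R,
        (∫ s in (0:ℝ)..x, a s ^ (n - 1)) ^ 2 * (deriv u x) ^ 2 / a x ^ (n - 1) :=
  integral_sq_mul_lt_four_mul_integral hR (ha.pow _) (fun x hx => pow_pos (hapos x hx) _) hu huR
    hune hint1 hint2

theorem stmt_2 (R : ℝ) (hR : 0 < R) (n : ℕ) (hn : 2 < n)
    (a : ℝ → ℝ) (ha : ContinuousOn a (Set.Icc 0 R))
    (ha0 : a 0 = 0)
    (hapos : ∀ x ∈ Set.Ioc (0:ℝ) R, 0 < a x)
    (u : ℝ → ℝ) (hu : ContDiffOn ℝ 1 u (Set.Icc 0 R))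
    (huR : u R = 0)
    (hune : ∃ x ∈ Set.Icc (0:ℝ) R, u x ≠ 0)
    (hint1 : IntervalIntegrable (fun x => u x ^ 2 * a x ^ (n - 1)) MeasureTheory.volume 0 R)
    (hint2 : IntervalIntegrable
      (fun x => (∫ s in (0:ℝ)..x, a s ^ (n - 1)) ^ 2 * (deriv u x) ^ 2 / a x ^ (n - 1))
      MeasureTheory.volume 0 R) :
    (∫ x in (0:ℝ)..R, u x ^ 2 * a x ^ (n - 1)) <
      4 * ∫ x in (0:ℝ)..R,
        (∫ s in (0:ℝ)..x, a s ^ (n - 1)) ^ 2 * (deriv u x) ^ 2 / a x ^ (n - 1) :=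
  stmt_2_general R hR n a ha hapos u hu huR hune hint1 hint2
end

section
/- Let a ∈ C³[0,R] satisfy a(0)=0, a'>0 on (0,R), and a'' ≥ ωa on (0,R) for some ω ≥ 0. Let D = inf_{0<x<R} [(2n-3)a''/a + a'''/a'] and C = min{(D+2ω)/(2(n+2)), D/4}. Define G(x)=∫₀ˣ a^{n-1} ds and S(x)=Ga'/a - a^{n-1}/n. Then S(x) ≥ C·G(x)²/G'(x) for all x ∈ (0,R). -/
/-!
Put `f = S G' - C G²`, multiplied out as `G a' a^(n-2) - (a^(n-1))²/n - C G²` so that it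
is continuous at `0`, where it vanishes. Its derivative is `a^(n-3) g` with
`g = G (a a'' + (n-2) a'² - 2C a²) - (n-2)/n · a^n a'`, so it suffices that `g ≥ 0`.
Again `g(0) = 0` and `g' = (2/n) a^n a'' - 2C a^(n+1) + G (a a''' + (2n-3) a' a'' - 4C a a')`.
The bracket is at least `a a' (D - 4C) ≥ 0` by the choice of `D`, and `G a' ≥ a^n/n` since
`G a' - a^n/n` vanishes at `0` with derivative `G a'' ≥ 0`; with `a'' ≥ ω a` this yields
`g' ≥ a^(n+1) (D + 2ω - 2(n+2)C)/n ≥ 0`.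
-/

open Set

theorem nonneg_of_hasDerivAt_nonneg {f f' : ℝ → ℝ} {l r : ℝ} (hf : ContinuousOn f (Icc l r))
    (hl : f l = 0) (hf' : ∀ x ∈ Ioo l r, HasDerivAt f (f' x) x)
    (hf'_nonneg : ∀ x ∈ Ioo l r, 0 ≤ f' x) : ∀ x ∈ Icc l r, 0 ≤ f x := by
  have hmono : MonotoneOn f (Icc l r) := by
    refine monotoneOn_of_hasDerivWithinAt_nonneg (f' := f') (convex_Icc l r) hf ?_ ?_ <;>
      rw [interior_Icc]
    · exact fun x hx => (hf' x hx).hasDerivWithinAt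
    · exact hf'_nonneg
  intro x hx
  exact hl ▸ hmono (left_mem_Icc.2 (hx.1.trans hx.2)) hx hx.1

theorem ContinuousOn.integral_hasDerivAt_right_of_mem_Ioo {f : ℝ → ℝ} {l r x : ℝ}
    (hf : ContinuousOn f (Icc l r)) (hx : x ∈ Ioo l r) :
    HasDerivAt (fun y => ∫ t in l..y, f t) (f x) x :=
  intervalIntegral.integral_hasDerivAt_right
    ((hf.mono (Icc_subset_Icc_right hx.2.le)).intervalIntegrable_of_Icc hx.1.le)
    ((hf.mono Ioo_subset_Icc_self).stronglyMeasurableAtFilter isOpen_Ioo x hx)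
    (hf.continuousAt (Icc_mem_nhds hx.1 hx.2))

theorem ContinuousOn.continuousOn_primitive_Icc {f : ℝ → ℝ} {l r : ℝ} (hlr : l ≤ r)
    (hf : ContinuousOn f (Icc l r)) : ContinuousOn (fun y => ∫ t in l..y, f t) (Icc l r) := by
  have := intervalIntegral.continuousOn_primitive_interval (μ := MeasureTheory.volume)
    (by rw [uIcc_of_le hlr]; exact hf.integrableOn_Icc)
  rwa [uIcc_of_le hlr] at this

theorem ContDiffOn.hasDerivAt_derivWithin_Icc {f : ℝ → ℝ} {l r x : ℝ} {k : WithTop ℕ∞}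
    (hf : ContDiffOn ℝ k f (Icc l r)) (hk : k ≠ 0) (hx : x ∈ Ioo l r) :
    HasDerivAt f (derivWithin f (Icc l r) x) x :=
  (hf.differentiableOn hk x (Ioo_subset_Icc_self hx)).hasDerivWithinAt.hasDerivAt
    (Icc_mem_nhds hx.1 hx.2)

theorem eqOn_deriv_derivWithin_Icc (f : ℝ → ℝ) (l r : ℝ) :
    EqOn (deriv f) (derivWithin f (Icc l r)) (Ioo l r) :=
  fun _ hx => (derivWithin_of_mem_nhds (Icc_mem_nhds hx.1 hx.2)).symm

-- With `a₁, a₂, a₃` the values of `a', a'', a'''` at a point, the right side is `g'` there.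
theorem two_div_mul_pow_mul_sub_add_mul_nonneg {n : ℕ} {C D ω a a₁ a₂ a₃ G : ℝ}
    (hn : n ≠ 0) (ha : 0 < a) (ha₁ : 0 < a₁) (ha₂ : ω * a ≤ a₂)
    (hD : D ≤ (2 * n - 3) * a₂ / a + a₃ / a₁)
    (hCD : 4 * C ≤ D) (hCDω : 2 * (n + 2) * C ≤ D + 2 * ω) (hG : a ^ n / n ≤ G * a₁) :
    0 ≤ 2 / n * a ^ n * a₂ - 2 * C * a ^ n * a
      + G * (a * a₃ + (2 * n - 3) * a₁ * a₂ - 4 * C * a * a₁) := by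
  have hn_pos : (0 : ℝ) < n := by positivity
  have hG_nonneg : 0 ≤ G :=
    (pos_of_mul_pos_left ((div_pos (pow_pos ha n) hn_pos).trans_le hG) ha₁.le).le
  have hB : a * a₁ * (D - 4 * C) ≤ a * a₃ + (2 * n - 3) * a₁ * a₂ - 4 * C * a * a₁ := by
    rw [div_add_div _ _ ha.ne' ha₁.ne', le_div_iff₀ (by positivity)] at hD
    linarith
  have hDC : 0 ≤ a * (D - 4 * C) := mul_nonneg ha.le (sub_nonneg.2 hCD)
  have hDCω := sub_nonneg.2 hCDω
  calc (0 : ℝ) ≤ a ^ n * a * (D + 2 * ω - 2 * (n + 2) * C) / n := by positivity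
    _ = 2 / n * a ^ n * (ω * a) - 2 * C * a ^ n * a + a ^ n / n * (a * (D - 4 * C)) := by
      field_simp
      ring
    _ ≤ 2 / n * a ^ n * a₂ - 2 * C * a ^ n * a + G * a₁ * (a * (D - 4 * C)) := by gcongr
    _ = 2 / n * a ^ n * a₂ - 2 * C * a ^ n * a + G * (a * a₁ * (D - 4 * C)) := by ring
    _ ≤ _ := by gcongr

section

variable {R C D ω : ℝ} {n : ℕ} {a a' a'' a''' G : ℝ → ℝ}

theorem pow_div_le_primitive_mul_deriv (hn : n ≠ 0) (ha : ContinuousOn a (Icc 0 R))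
    (ha' : ContinuousOn a' (Icc 0 R)) (hG : ContinuousOn G (Icc 0 R)) (ha0 : a 0 = 0)
    (hG0 : G 0 = 0) (hda : ∀ x ∈ Ioo 0 R, HasDerivAt a (a' x) x)
    (hda' : ∀ x ∈ Ioo 0 R, HasDerivAt a' (a'' x) x)
    (hdG : ∀ x ∈ Ioo 0 R, HasDerivAt G (a x ^ (n - 1)) x)
    (hG_nonneg : ∀ x ∈ Icc 0 R, 0 ≤ G x) (ha''_nonneg : ∀ x ∈ Ioo 0 R, 0 ≤ a'' x) :
    ∀ x ∈ Icc 0 R, a x ^ n / n ≤ G x * a' x := by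
  have key := nonneg_of_hasDerivAt_nonneg (f := fun x => G x * a' x - a x ^ n / n)
    (f' := fun x => G x * a'' x) (by fun_prop) (by simp [ha0, hG0, hn])
    (fun x hx => (((hdG x hx).mul (hda' x hx)).sub
      (((hda x hx).pow n).div_const (n : ℝ))).congr_deriv (by field_simp; ring))
    (fun x hx => mul_nonneg (hG_nonneg x (Ioo_subset_Icc_self hx)) (ha''_nonneg x hx))
  exact fun x hx => sub_nonneg.1 (key x hx)

theorem pow_mul_deriv_le_primitive_mul (hn : n ≠ 0) (ha : ContinuousOn a (Icc 0 R))
    (ha' : ContinuousOn a' (Icc 0 R)) (ha'' : ContinuousOn a'' (Icc 0 R))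
    (hG : ContinuousOn G (Icc 0 R)) (ha0 : a 0 = 0) (hG0 : G 0 = 0)
    (hda : ∀ x ∈ Ioo 0 R, HasDerivAt a (a' x) x)
    (hda' : ∀ x ∈ Ioo 0 R, HasDerivAt a' (a'' x) x)
    (hda'' : ∀ x ∈ Ioo 0 R, HasDerivAt a'' (a''' x) x)
    (hdG : ∀ x ∈ Ioo 0 R, HasDerivAt G (a x ^ (n - 1)) x)
    (ha_pos : ∀ x ∈ Ioo 0 R, 0 < a x) (ha'_pos : ∀ x ∈ Ioo 0 R, 0 < a' x)
    (ha''_ge : ∀ x ∈ Ioo 0 R, ω * a x ≤ a'' x)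
    (hD : ∀ x ∈ Ioo 0 R, D ≤ (2 * n - 3) * a'' x / a x + a''' x / a' x)
    (hCD : 4 * C ≤ D) (hCDω : 2 * (n + 2) * C ≤ D + 2 * ω)
    (hF : ∀ x ∈ Icc 0 R, a x ^ n / n ≤ G x * a' x) :
    ∀ x ∈ Icc 0 R,
      (n - 2) / n * (a x ^ n * a' x) ≤
        G x * (a x * a'' x + (n - 2) * a' x ^ 2 - 2 * C * a x ^ 2) := by
  have key := nonneg_of_hasDerivAt_nonneg
    (f := fun x => G x * (a x * a'' x + (n - 2) * a' x ^ 2 - 2 * C * a x ^ 2)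
      - (n - 2) / n * (a x ^ n * a' x))
    (f' := fun x => 2 / n * a x ^ n * a'' x - 2 * C * a x ^ n * a x
      + G x * (a x * a''' x + (2 * n - 3) * a' x * a'' x - 4 * C * a x * a' x))
    (by fun_prop) (by simp [ha0, hG0, hn])
    (fun x hx => by
      refine (((hdG x hx).mul ((((hda x hx).mul (hda'' x hx)).add
        (((hda' x hx).pow 2).const_mul _)).sub (((hda x hx).pow 2).const_mul _))).sub
        ((((hda x hx).pow n).mul (hda' x hx)).const_mul _)).congr_deriv ?_
      simp only [Pi.add_apply, Pi.sub_apply, Pi.mul_apply, Pi.pow_apply]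
      rw [← pow_sub_one_mul hn (a x)]
      field_simp
      ring)
    (fun x hx => two_div_mul_pow_mul_sub_add_mul_nonneg hn (ha_pos x hx) (ha'_pos x hx)
      (ha''_ge x hx) (hD x hx) hCD hCDω (hF x (Ioo_subset_Icc_self hx)))
  exact fun x hx => sub_nonneg.1 (key x hx)

theorem mul_sq_div_le_of_pow_mul_deriv_le (hn : 2 ≤ n) (ha : ContinuousOn a (Icc 0 R))
    (ha' : ContinuousOn a' (Icc 0 R)) (hG : ContinuousOn G (Icc 0 R)) (ha0 : a 0 = 0)
    (hG0 : G 0 = 0) (hda : ∀ x ∈ Ioo 0 R, HasDerivAt a (a' x) x)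
    (hda' : ∀ x ∈ Ioo 0 R, HasDerivAt a' (a'' x) x)
    (hdG : ∀ x ∈ Ioo 0 R, HasDerivAt G (a x ^ (n - 1)) x) (ha_pos : ∀ x ∈ Ioo 0 R, 0 < a x)
    (hg : ∀ x ∈ Icc 0 R, (n - 2) / n * (a x ^ n * a' x) ≤
      G x * (a x * a'' x + (n - 2) * a' x ^ 2 - 2 * C * a x ^ 2)) :
    ∀ x ∈ Ioo 0 R, C * G x ^ 2 / a x ^ (n - 1) ≤ G x * a' x / a x - a x ^ (n - 1) / n := by
  obtain ⟨k, rfl⟩ := Nat.exists_eq_add_of_le' hn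
  simp only [show k + 2 - 1 = k + 1 from rfl] at hdG ⊢
  have key := nonneg_of_hasDerivAt_nonneg
    (f := fun x => G x * a' x * a x ^ k - (a x ^ (k + 1)) ^ 2 / (k + 2 : ℕ)
      - C * G x ^ 2)
    (f' := fun x => a x ^ k * (G x * (a x * a'' x + (((k + 2 : ℕ) : ℝ) - 2) * a' x ^ 2
      - 2 * C * a x ^ 2)
      - (((k + 2 : ℕ) : ℝ) - 2) / (k + 2 : ℕ) * (a x ^ (k + 2) * a' x)) / a x)
    (by fun_prop) (by simp [ha0, hG0])
    (fun x hx => by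
      refine ((((hdG x hx).mul (hda' x hx)).mul ((hda x hx).pow k)).sub
        ((((hda x hx).pow (k + 1)).pow 2).div_const _)).sub
        (((hdG x hx).pow 2).const_mul C) |>.congr_deriv ?_
      have hax := (ha_pos x hx).ne'
      simp only [Pi.mul_apply, Pi.pow_apply]
      rcases k with _ | k <;> push_cast [Nat.add_sub_cancel] <;> field_simp <;> ring)
    (fun x hx => div_nonneg (mul_nonneg (pow_nonneg (ha_pos x hx).le k)
      (sub_nonneg.2 (hg x (Ioo_subset_Icc_self hx)))) (ha_pos x hx).le)
  intro x hx
  have hax := ha_pos x hx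
  have hS : (G x * a' x / a x - a x ^ (k + 1) / (k + 2 : ℕ)) * a x ^ (k + 1) =
      G x * a' x * a x ^ k - (a x ^ (k + 1)) ^ 2 / (k + 2 : ℕ) := by
    field_simp
    ring
  rw [div_le_iff₀ (pow_pos hax _), hS]
  linarith [key x (Ioo_subset_Icc_self hx)]

theorem mul_sq_div_le_primitive_mul_deriv_div_sub (hR : 0 ≤ R) (hn : 2 ≤ n) (hω : 0 ≤ ω)
    (ha : ContinuousOn a (Icc 0 R)) (ha' : ContinuousOn a' (Icc 0 R))
    (ha'' : ContinuousOn a'' (Icc 0 R)) (ha0 : a 0 = 0)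
    (hda : ∀ x ∈ Ioo 0 R, HasDerivAt a (a' x) x)
    (hda' : ∀ x ∈ Ioo 0 R, HasDerivAt a' (a'' x) x)
    (hda'' : ∀ x ∈ Ioo 0 R, HasDerivAt a'' (a''' x) x)
    (ha_pos : ∀ x ∈ Ioo 0 R, 0 < a x) (ha'_pos : ∀ x ∈ Ioo 0 R, 0 < a' x)
    (ha''_ge : ∀ x ∈ Ioo 0 R, ω * a x ≤ a'' x)
    (hD : ∀ x ∈ Ioo 0 R, D ≤ (2 * n - 3) * a'' x / a x + a''' x / a' x)
    (hCD : 4 * C ≤ D) (hCDω : 2 * (n + 2) * C ≤ D + 2 * ω) :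
    ∀ x ∈ Ioo 0 R, C * (∫ s in (0:ℝ)..x, a s ^ (n - 1)) ^ 2 / a x ^ (n - 1) ≤
      (∫ s in (0:ℝ)..x, a s ^ (n - 1)) * a' x / a x - a x ^ (n - 1) / n := by
  have hpow : ContinuousOn (fun s => a s ^ (n - 1)) (Icc 0 R) := ha.pow _
  have hG := hpow.continuousOn_primitive_Icc hR
  have hdG x (hx : x ∈ Ioo 0 R) := hpow.integral_hasDerivAt_right_of_mem_Ioo hx
  have hG0 : ∫ s in (0:ℝ)..0, a s ^ (n - 1) = 0 := intervalIntegral.integral_same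
  have hG_nonneg :=
    nonneg_of_hasDerivAt_nonneg hG hG0 hdG fun x hx => pow_nonneg (ha_pos x hx).le _
  have hF := pow_div_le_primitive_mul_deriv (by omega) ha ha' hG ha0 hG0 hda hda' hdG hG_nonneg
    fun x hx => (mul_nonneg hω (ha_pos x hx).le).trans (ha''_ge x hx)
  have hg := pow_mul_deriv_le_primitive_mul (by omega) ha ha' ha'' hG ha0 hG0 hda hda' hda'' hdG
    ha_pos ha'_pos ha''_ge hD hCD hCDω hF
  exact mul_sq_div_le_of_pow_mul_deriv_le hn ha ha' hG ha0 hG0 hda hda' hdG ha_pos hg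

end

theorem stmt_7 (R : ℝ) (hR : 0 < R) (n : ℕ) (hn : 2 < n)
    (ω : ℝ) (hω : 0 ≤ ω)
    (a : ℝ → ℝ) (ha : ContDiffOn ℝ 3 a (Set.Icc 0 R))
    (ha0 : a 0 = 0)
    (hapos : ∀ x ∈ Set.Ioo (0:ℝ) R, 0 < a x)
    (ha'pos : ∀ x ∈ Set.Ioo (0:ℝ) R, 0 < deriv a x)
    (ha'' : ∀ x ∈ Set.Ioo (0:ℝ) R, ω * a x ≤ deriv (deriv a) x)
    (D : ℝ)
    (hD : IsGLB {y : ℝ | ∃ x ∈ Set.Ioo (0:ℝ) R,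
      y = (2 * (n : ℝ) - 3) * deriv (deriv a) x / a x +
        deriv (deriv (deriv a)) x / deriv a x} D)
    (C : ℝ) (hC : C = min ((D + 2 * ω) / (2 * ((n : ℝ) + 2))) (D / 4)) :
    ∀ x ∈ Set.Ioo (0:ℝ) R,
      C * (∫ s in (0:ℝ)..x, a s ^ (n - 1)) ^ 2 / a x ^ (n - 1) ≤
        (∫ s in (0:ℝ)..x, a s ^ (n - 1)) * deriv a x / a x - a x ^ (n - 1) / n := by
  -- `a` is only `C³` up to the endpoints, where `deriv a` need not be continuous, so the
  -- derivatives are taken within `Icc 0 R`; they agree with `deriv` on `Ioo 0 R`.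
  have hI : UniqueDiffOn ℝ (Icc 0 R) := uniqueDiffOn_Icc hR
  have ha₁ : ContDiffOn ℝ 2 (derivWithin a (Icc 0 R)) (Icc 0 R) :=
    ha.derivWithin hI (by norm_num)
  have ha₂ : ContDiffOn ℝ 1 (derivWithin (derivWithin a (Icc 0 R)) (Icc 0 R)) (Icc 0 R) :=
    ha₁.derivWithin hI (by norm_num)
  set a' := derivWithin a (Icc 0 R)
  set a'' := derivWithin a' (Icc 0 R)
  have hd₁ : EqOn (deriv a) a' (Ioo 0 R) := eqOn_deriv_derivWithin_Icc a 0 R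
  have hd₂ : EqOn (deriv (deriv a)) a'' (Ioo 0 R) :=
    (hd₁.deriv isOpen_Ioo).trans (eqOn_deriv_derivWithin_Icc a' 0 R)
  have hd₃ : EqOn (deriv (deriv (deriv a))) (derivWithin a'' (Icc 0 R)) (Ioo 0 R) :=
    (hd₂.deriv isOpen_Ioo).trans (eqOn_deriv_derivWithin_Icc a'' 0 R)
  have hCD : 4 * C ≤ D := by linarith [(hC ▸ min_le_right _ _ : C ≤ D / 4)]
  have hCDω : 2 * (n + 2) * C ≤ D + 2 * ω :=
    (le_div_iff₀' (by positivity)).1 (hC ▸ min_le_left _ _)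
  intro x hx
  rw [hd₁ hx]
  refine mul_sq_div_le_primitive_mul_deriv_div_sub hR.le hn.le hω ha.continuousOn
    ha₁.continuousOn ha₂.continuousOn ha0
    (fun y hy => ha.hasDerivAt_derivWithin_Icc (by norm_num) hy)
    (fun y hy => ha₁.hasDerivAt_derivWithin_Icc (by norm_num) hy)
    (fun y hy => ha₂.hasDerivAt_derivWithin_Icc (by norm_num) hy) hapos
    (fun y hy => (ha'pos y hy).trans_eq (hd₁ hy)) (fun y hy => (ha'' y hy).trans_eq (hd₂ hy))
    (fun y hy => ?_) hCD hCDω x hx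
  simpa only [hd₁ hy, hd₂ hy, hd₃ hy] using hD.1 ⟨y, hy, rfl⟩
end

section
/- Let R > 0, s = (1+R)(2+R), D = (1+2/R)(2n-3) + (3+R)/(1+R), and ω = 1 + 2/R. Then (D+2ω)/(2(n+2)) ≤ D/4 if and only if n ≥ n̂(s) := (1/2)[(1+1/s) + √((1+1/s)² + 8)]. -/
theorem stmt_15 (R : ℝ) (hR : 0 < R) (n : ℝ) (hn : 2 < n)
    (s D ω : ℝ) (hs : s = (1 + R) * (2 + R))
    (hD : D = (1 + 2 / R) * (2 * n - 3) + (3 + R) / (1 + R))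
    (hω : ω = 1 + 2 / R) :
    (D + 2 * ω) / (2 * (n + 2)) ≤ D / 4 ↔
      n ≥ (1 / 2) * ((1 + 1 / s) + Real.sqrt ((1 + 1 / s) ^ 2 + 8)) := by
  subst hs hD hω
  have h1R : (0:ℝ) < 1 + R := by linarith
  have h2R : (0:ℝ) < 2 + R := by linarith
  have hs0 : (0:ℝ) < (1 + R) * (2 + R) := by positivity
  set b : ℝ := 1 + 1 / ((1 + R) * (2 + R)) with hb
  have hb2 : b < 2 := by
    have : 1 / ((1 + R) * (2 + R)) < 1 := by
      rw [div_lt_one hs0]; nlinarith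
    simp only [hb]; linarith
  have hbpos : 0 < b := by
    have : 0 < 1 / ((1 + R) * (2 + R)) := by positivity
    simp only [hb]; linarith
  have hω0 : (0:ℝ) < 1 + 2 / R := by positivity
  have hid : ((1 + 2 / R) * (2 * n - 3) + (3 + R) / (1 + R)) * (2 * (n + 2))
      - (((1 + 2 / R) * (2 * n - 3) + (3 + R) / (1 + R)) + 2 * (1 + 2 / R)) * 4
      = 4 * (1 + 2 / R) * (n ^ 2 - b * n - 2) := by
    simp only [hb]
    field_simp
    ring
  have key : (((1 + 2 / R) * (2 * n - 3) + (3 + R) / (1 + R)) + 2 * (1 + 2 / R)) / (2 * (n + 2))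
      ≤ ((1 + 2 / R) * (2 * n - 3) + (3 + R) / (1 + R)) / 4 ↔ 0 ≤ n ^ 2 - b * n - 2 := by
    rw [div_le_div_iff₀ (by linarith : (0:ℝ) < 2 * (n + 2)) (by norm_num : (0:ℝ) < 4)]
    have h40 : (0:ℝ) < 4 * (1 + 2 / R) := by positivity
    constructor
    · intro h
      by_contra hc
      push_neg at hc
      have := mul_neg_of_pos_of_neg h40 (by linarith : n ^ 2 - b * n - 2 < 0)
      linarith
    · intro h
      have := mul_nonneg h40.le h
      linarith
  rw [key]
  set q : ℝ := Real.sqrt (b ^ 2 + 8) with hq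
  have hq0 : 0 ≤ q := Real.sqrt_nonneg _
  have hq2 : q ^ 2 = b ^ 2 + 8 := Real.sq_sqrt (by positivity)
  clear_value q
  clear_value b
  constructor
  · intro h
    have h2nb : 0 ≤ 2 * n - b := by linarith
    have hle : b ^ 2 + 8 ≤ (2 * n - b) ^ 2 := by nlinarith
    have h3 := Real.sqrt_le_sqrt hle
    rw [Real.sqrt_sq h2nb, ← hq] at h3
    rw [ge_iff_le]
    linarith
  · intro h
    rw [ge_iff_le] at h
    have hqn : q ≤ 2 * n - b := by linarith
    nlinarith [hq2, hq0]
end
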